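/- arXiv:1412.7646 — 4 statements merged into one kernel-verified Lean document; each statement's English description precedes it below -/
import Mathlib

section
/- For left degree d = 2, the density evolution map f(p) = 1 − e^{−2p/η} satisfies f(p) < p for every p ∈ (0, 1] if and only if η ≥ 2. (This is the entry d = 2, minimum η = 2.0000 of Table I.) -/
/-!
Write `a = 2 / η`, so `f p = 1 - exp (-(a p))`. If `a ≤ 1`, then `exp (-(a p)) ≥ exp (-p) > 1 - p`.
If `a > 1`, the bound `exp (-x) ≤ 1 / (1 + x)` gives `f p ≥ a p / (1 + a p)`, which is at least `p`
as long as `1 + a p ≤ a`, e.g. at `p = (2 - η) / 2 ∈ (0, 1)`.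
-/

open Real

theorem one_sub_exp_neg_mul_lt_self {a p : ℝ} (ha : a ≤ 1) (hp : 0 < p) :
    1 - exp (-(a * p)) < p := by
  have hap : a * p ≤ p := by nlinarith
  calc 1 - exp (-(a * p)) ≤ 1 - exp (-p) := by gcongr
    _ < p := by linarith [add_one_lt_exp (neg_ne_zero.2 hp.ne')]

theorem le_one_sub_exp_neg_mul {a p : ℝ} (ha : 0 ≤ a) (hp : 0 ≤ p) (h : 1 + a * p ≤ a) :
    p ≤ 1 - exp (-(a * p)) := by
  have hpos : 0 < 1 + a * p := by positivity
  have hexp : exp (-(a * p)) * (1 + a * p) ≤ 1 :=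
    calc exp (-(a * p)) * (1 + a * p) ≤ exp (-(a * p)) * exp (a * p) := by
          gcongr; linarith [add_one_le_exp (a * p)]
      _ = 1 := by rw [← exp_add, neg_add_cancel, exp_zero]
  refine le_of_mul_le_mul_right ?_ hpos
  nlinarith

/-- For left degree `d = 2`, the density evolution map `f(p) = 1 - exp (-(2 p) / η)`
satisfies `f p < p` for every `p ∈ (0, 1]` if and only if `η ≥ 2`. -/
theorem density_evolution_d2_contracting_iff (η : ℝ) (hη : 0 < η) :
    (∀ p : ℝ, 0 < p → p ≤ 1 → 1 - Real.exp (-(2 * p) / η) < p) ↔ 2 ≤ η := by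
  have hrate (p : ℝ) : -(2 * p) / η = -(2 / η * p) := by ring
  simp only [hrate]
  constructor
  · intro hcontr
    by_contra! hη2
    have hwitness : 1 + 2 / η * ((2 - η) / 2) ≤ 2 / η := by
      field_simp
      linarith
    exact (hcontr _ (by linarith) (by linarith)).not_ge
      (le_one_sub_exp_neg_mul (by positivity) (by linarith) hwitness)
  · intro hη2 p hp _
    exact one_sub_exp_neg_mul_lt_self ((div_le_one hη).2 hη2) hp
end

section
/- Let D ≥ 1 be an integer and ε > 0 with D ≥ 1/ε. Set H(D) = Σ_{j=1}^{D} 1/j, λ(x) = (1/H(D)) Σ_{m=1}^{D} x^m/m, and d̄ = H(D)(1 + 1/D). Then for every x ∈ (0, 1], exp(−(d̄/(1+ε)) λ(x)) > 1 − x; that is, the right degree generating polynomial ρ(x) = exp(−(d̄/(1+ε))(1−x)) satisfies ρ(1 − λ(x)) > 1 − x for all x ∈ (0, 1]. (This is the contraction condition guaranteeing that density evolution for the irregular ensemble with R = (1+ε)K right nodes drives the edge density to zero whenever D > 1/ε.) -/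
/-! The exponent is `-(c * S)` with `S = ∑_{m=1}^D x^m/m` and `c = (1 + 1/D)/(1 + ε) ≤ 1`
(as `1/D ≤ ε`); the normalisation by `H` cancels. `S` is a partial sum of the positive series
`-log (1 - x) = ∑_{m ≥ 1} x^m/m`, so `S < -log (1 - x)` for `0 < x < 1`, whence
`exp (-(c * S)) ≥ exp (-S) > 1 - x`. At `x = 1` the claim is just `0 < exp _`. -/

open Finset Real

theorem sum_Icc_pow_div_lt_neg_log_one_sub {x : ℝ} (hx₀ : 0 < x) (hx₁ : x < 1) (D : ℕ) :
    ∑ m ∈ Icc 1 D, x ^ m / (m : ℝ) < -log (1 - x) := by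
  have hseries := hasSum_pow_div_log_of_abs_lt_one (abs_lt.mpr ⟨by linarith, hx₁⟩)
  have hpartial : ∑ n ∈ range (D + 1), x ^ (n + 1) / ((n : ℝ) + 1) ≤ -log (1 - x) :=
    sum_le_hasSum _ (fun n _ => by positivity) hseries
  have hreindex :
      ∑ m ∈ Icc 1 D, x ^ m / (m : ℝ) = ∑ n ∈ range D, x ^ (n + 1) / ((n : ℝ) + 1) := by
    rw [← Ico_add_one_right_eq_Icc, sum_Ico_eq_sum_range]
    simp [add_comm]
  rw [sum_range_succ] at hpartial
  have htail : 0 < x ^ (D + 1) / ((D : ℝ) + 1) := by positivity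
  linarith

theorem one_sub_lt_exp_neg_mul_sum_Icc_pow_div {x c : ℝ} (hx₀ : 0 < x) (hx₁ : x ≤ 1)
    (hc : c ≤ 1) (D : ℕ) : 1 - x < exp (-(c * ∑ m ∈ Icc 1 D, x ^ m / (m : ℝ))) := by
  obtain hx₁ | rfl := hx₁.lt_or_eq
  · set S := ∑ m ∈ Icc 1 D, x ^ m / (m : ℝ)
    have hS : 0 ≤ S := sum_nonneg fun m _ => by positivity
    calc 1 - x = exp (log (1 - x)) := (exp_log (by linarith)).symm
      _ < exp (-S) := exp_lt_exp.mpr (by linarith [sum_Icc_pow_div_lt_neg_log_one_sub hx₀ hx₁ D])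
      _ ≤ exp (-(c * S)) := exp_le_exp.mpr (by nlinarith)
  · simpa using exp_pos _

theorem irregular_density_evolution_contraction_general (D : ℕ)
    (ε : ℝ) (hε : 0 < ε) (hDε : 1 / ε ≤ (D : ℝ))
    (H : ℝ)
    (lam : ℝ → ℝ) (hlam : ∀ x : ℝ, lam x = (1 / H) * ∑ m ∈ Finset.Icc 1 D, x ^ m / (m : ℝ))
    (dbar : ℝ) (hdbar : dbar = H * (1 + 1 / (D : ℝ))) :
    ∀ x : ℝ, 0 < x → x ≤ 1 → 1 - x < Real.exp (-(dbar / (1 + ε)) * lam x) := by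
  intro x hx₀ hx₁
  have hD : 0 < (D : ℝ) := (one_div_pos.mpr hε).trans_le hDε
  have hinvD : 1 / (D : ℝ) ≤ ε := (one_div_le hε hD).mp hDε
  have hc : H * (1 / H) * ((1 + 1 / D) / (1 + ε)) ≤ 1 :=
    mul_le_one₀ (by simpa using mul_inv_le_one) (by positivity)
      ((div_le_one (by linarith)).mpr (by linarith))
  convert one_sub_lt_exp_neg_mul_sum_Icc_pow_div hx₀ hx₁ hc D using 2
  rw [hlam, hdbar]
  ring

/-- Contraction condition for the irregular ensemble: if `D ≥ 1/ε` then, with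
`H(D) = ∑_{j=1}^D 1/j`, `λ(x) = (1/H(D)) ∑_{m=1}^D x^m/m` and `d̄ = H(D)(1 + 1/D)`,
for every `x ∈ (0,1]` we have `exp (-(d̄/(1+ε)) λ(x)) > 1 - x`. -/
theorem irregular_density_evolution_contraction (D : ℕ) (hD : 1 ≤ D)
    (ε : ℝ) (hε : 0 < ε) (hDε : 1 / ε ≤ (D : ℝ))
    (H : ℝ) (hH : H = ∑ j ∈ Finset.Icc 1 D, (1 : ℝ) / (j : ℝ))
    (lam : ℝ → ℝ) (hlam : ∀ x : ℝ, lam x = (1 / H) * ∑ m ∈ Finset.Icc 1 D, x ^ m / (m : ℝ))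
    (dbar : ℝ) (hdbar : dbar = H * (1 + 1 / (D : ℝ))) :
    ∀ x : ℝ, 0 < x → x ≤ 1 → 1 - x < Real.exp (-(dbar / (1 + ε)) * lam x) :=
  irregular_density_evolution_contraction_general D ε hε hDε H lam hlam dbar hdbar
end

section
/- Let N ≥ 2, let T ⊆ {0, …, N−1} with |T| ≥ 2, and let (a_n)_{n∈T} be nonzero complex numbers. Then the set of real vectors (g_0, …, g_{N−1}) ∈ ℝ^N for which there exists ℓ ∈ {0, …, N−1} with Σ_{n∈T} a_n g_n (e^{2πin/N} − e^{2πiℓ/N}) = 0 has N-dimensional Lebesgue measure zero. (Consequently, when the column scalings G_n are drawn from a continuous distribution, the event that a multi-ton bin passes the noiseless ratio test — i.e., that the ratio of its two DFT measurements equals e^{2πiℓ/N} for some ℓ, or that the bin measurements vanish — has probability zero.) -/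
/-! For each fixed `ℓ` the condition is a single real-linear equation in `g`. Since `|T| ≥ 2`
there is `n ∈ T` with `n ≠ ℓ`, and distinct `N`-th roots of unity give `e^{2πin/N} ≠ e^{2πiℓ/N}`,
so the coefficient of `g n` is `a n (e^{2πin/N} - e^{2πiℓ/N}) ≠ 0`. The solution set is thus a
proper subspace, which is Lebesgue-null, and the union over the `N` values of `ℓ` is null too. -/

open MeasureTheory

theorem Complex.exp_two_pi_I_mul_div_injective (N : ℕ) :
    Function.Injective fun n : Fin N =>
      Complex.exp (2 * Real.pi * Complex.I * ((n : ℕ) : ℂ) / N) := by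
  intro n m h
  have hN : N ≠ 0 := Nat.pos_iff_ne_zero.mp (Fin.pos n)
  have hpow (k : ℕ) : Complex.exp (2 * Real.pi * Complex.I * (k : ℂ) / N) =
      Complex.exp (2 * Real.pi * Complex.I / N) ^ k := by
    rw [← Complex.exp_nat_mul]
    ring_nf
  simp only [hpow] at h
  exact Fin.ext ((Complex.isPrimitiveRoot_exp N hN).pow_inj n.isLt m.isLt h)

theorem volume_setOf_sum_mul_eq_zero {ι : Type*} [Fintype ι] (T : Finset ι) (c : ι → ℂ)
    (hc : ∃ n ∈ T, c n ≠ 0) :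
    volume {g : ι → ℝ | ∑ n ∈ T, c n * g n = 0} = 0 := by
  classical
  obtain ⟨n₀, hn₀, hc₀⟩ := hc
  let φ : (ι → ℝ) →ₗ[ℝ] ℂ := ∑ n ∈ T, (LinearMap.proj n).smulRight (c n)
  have hφ (g : ι → ℝ) : φ g = ∑ n ∈ T, c n * g n := by
    simp [φ, LinearMap.sum_apply, Complex.real_smul, mul_comm]
  have hker : {g : ι → ℝ | ∑ n ∈ T, c n * g n = 0} = (LinearMap.ker φ : Set (ι → ℝ)) := by
    ext g
    simp [hφ]
  rw [hker]
  refine Measure.addHaar_submodule _ _ fun htop => hc₀ ?_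
  have hsingle : φ (Pi.single n₀ 1) = 0 := LinearMap.ker_eq_top.mp htop ▸ rfl
  rwa [hφ, Finset.sum_eq_single_of_mem n₀ hn₀ fun n _ hn => by simp [hn], Pi.single_eq_same,
    Complex.ofReal_one, mul_one] at hsingle

theorem multiton_ratio_test_measure_zero_general (N : ℕ)
    (T : Finset (Fin N)) (hT : 2 ≤ T.card)
    (a : Fin N → ℂ) (ha : ∀ n ∈ T, a n ≠ 0) :
    MeasureTheory.volume
      {g : Fin N → ℝ | ∃ ℓ : Fin N,
        ∑ n ∈ T, a n * (g n : ℂ) *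
          (Complex.exp (2 * Real.pi * Complex.I * ((n : ℕ) : ℂ) / N) -
            Complex.exp (2 * Real.pi * Complex.I * ((ℓ : ℕ) : ℂ) / N)) = 0} = 0 := by
  set e : Fin N → ℂ := fun n => Complex.exp (2 * Real.pi * Complex.I * ((n : ℕ) : ℂ) / N)
  rw [Set.ofPred_exists]
  refine measure_iUnion_null fun ℓ => ?_
  obtain ⟨n, hnT, hnℓ⟩ := Finset.exists_mem_ne hT ℓ
  have hcoeff : a n * (e n - e ℓ) ≠ 0 := mul_ne_zero (ha n hnT)
    (sub_ne_zero.mpr ((Complex.exp_two_pi_I_mul_div_injective N).ne hnℓ))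
  convert volume_setOf_sum_mul_eq_zero T (fun n => a n * (e n - e ℓ)) ⟨n, hnT, hcoeff⟩
    using 6
  ring

/-- The set of scaling vectors `g ∈ ℝ^N` for which a multi-ton (support `T`, `|T| ≥ 2`,
nonzero coefficients `a_n`) passes the noiseless ratio test — i.e. for which there is
`ℓ ∈ [N]` with `∑_{n ∈ T} a_n g_n (e^{2πin/N} - e^{2πiℓ/N}) = 0` — has Lebesgue
measure zero. -/
theorem multiton_ratio_test_measure_zero (N : ℕ) (hN : 2 ≤ N)
    (T : Finset (Fin N)) (hT : 2 ≤ T.card)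
    (a : Fin N → ℂ) (ha : ∀ n ∈ T, a n ≠ 0) :
    MeasureTheory.volume
      {g : Fin N → ℝ | ∃ ℓ : Fin N,
        ∑ n ∈ T, a n * (g n : ℂ) *
          (Complex.exp (2 * Real.pi * Complex.I * ((n : ℕ) : ℂ) / N) -
            Complex.exp (2 * Real.pi * Complex.I * ((ℓ : ℕ) : ℂ) / N)) = 0} = 0 :=
  multiton_ratio_test_measure_zero_general N T hT a ha
end

section
/- Let S be a nonempty finite set of m left nodes, d ≥ 1 an integer, and f a map assigning to each s ∈ S a finite set f(s) of right nodes with |f(s)| = d. Suppose the (ε, 1/2)-expansion property holds hereditarily on S: for every nonempty subset T ⊆ S, |⋃_{s∈T} f(s)| > d|T|/2. Then there is an ordering s_1, …, s_m of the elements of S such that for every i ∈ {1, …, m} there exists a right node r ∈ f(s_i) with r ∉ f(s_j) for all j > i. (Hence the peeling decoder, which at each step removes a left node attached to a single-ton right node, removes all of S.) -/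
/-!
Double counting the edges between `T` and its neighbourhood `N(T)` gives `∑_{s ∈ T} |f s| = d |T|`;
if every node of `N(T)` had two neighbours in `T`, this would be at least `2 |N(T)|`, contradicting
expansion. So every nonempty `T ⊆ S` has a left node with a private right neighbour. Putting such a
node of `S` first and ordering the rest recursively yields the peeling order.
-/

namespace Finset

variable {α β : Type*} [DecidableEq β]

theorem two_mul_card_biUnion_le_sum_card (T : Finset α) (f : α → Finset β)
    (h : ∀ r ∈ T.biUnion f, 2 ≤ #{s ∈ T | r ∈ f s}) :
    2 * #(T.biUnion f) ≤ ∑ s ∈ T, #(f s) :=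
  calc 2 * #(T.biUnion f) = ∑ _r ∈ T.biUnion f, 2 := by rw [sum_const, smul_eq_mul, mul_comm]
    _ ≤ ∑ r ∈ T.biUnion f, #{s ∈ T | r ∈ f s} := sum_le_sum h
    _ = ∑ s ∈ T, #{r ∈ T.biUnion f | r ∈ f s} :=
      (sum_card_bipartiteAbove_eq_sum_card_bipartiteBelow _).symm
    _ = ∑ s ∈ T, #(f s) := sum_congr rfl fun s hs => by
      rw [filter_mem_eq_inter, inter_eq_right.2 (subset_biUnion_of_mem f hs)]

theorem exists_private_neighbor_of_sum_card_lt (T : Finset α) (f : α → Finset β)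
    (h : ∑ s ∈ T, #(f s) < 2 * #(T.biUnion f)) :
    ∃ s ∈ T, ∃ r ∈ f s, ∀ s' ∈ T, r ∈ f s' → s' = s := by
  by_contra! hc
  refine h.not_ge (two_mul_card_biUnion_le_sum_card T f fun r hr => ?_)
  obtain ⟨s, hs, hrs⟩ := mem_biUnion.1 hr
  obtain ⟨s', hs', hrs', hne⟩ := hc s hs r hrs
  exact one_lt_card.2 ⟨s', mem_filter.2 ⟨hs', hrs'⟩, s, mem_filter.2 ⟨hs, hrs⟩, hne⟩

end Finset

section PeelingOrder

open Finset

variable {α β : Type*}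

def IsPeelingOrder (f : α → Finset β) (l : List α) : Prop :=
  ∀ i : Fin l.length, ∃ r ∈ f (l.get i), ∀ j : Fin l.length, (i : ℕ) < j → r ∉ f (l.get j)

theorem IsPeelingOrder.cons {f : α → Finset β} {s : α} {l : List α}
    (hs : ∃ r ∈ f s, ∀ t ∈ l, r ∉ f t) (hl : IsPeelingOrder f l) :
    IsPeelingOrder f (s :: l) := by
  rintro ⟨_ | i, hi⟩
  · obtain ⟨r, hr, hprivate⟩ := hs
    refine ⟨r, hr, ?_⟩
    rintro ⟨_ | j, hj⟩ hij
    · exact absurd hij (lt_irrefl 0)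
    · exact hprivate _ (List.get_mem _ _)
  · obtain ⟨r, hr, hprivate⟩ := hl ⟨i, Nat.lt_of_succ_lt_succ hi⟩
    refine ⟨r, hr, ?_⟩
    rintro ⟨_ | j, hj⟩ hij
    · exact absurd hij (Nat.not_lt_zero _)
    · exact hprivate ⟨j, Nat.lt_of_succ_lt_succ hj⟩ (Nat.lt_of_succ_lt_succ hij)

theorem exists_isPeelingOrder [DecidableEq α] (S : Finset α) (f : α → Finset β)
    (h : ∀ T ⊆ S, T.Nonempty → ∃ s ∈ T, ∃ r ∈ f s, ∀ s' ∈ T, r ∈ f s' → s' = s) :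
    ∃ l : List α, l.Nodup ∧ l.toFinset = S ∧ IsPeelingOrder f l := by
  induction S using Finset.strongInduction with
  | H S ih =>
  rcases S.eq_empty_or_nonempty with rfl | hne
  · exact ⟨[], List.nodup_nil, rfl, fun i => i.elim0⟩
  obtain ⟨s, hs, r, hr, hprivate⟩ := h S subset_rfl hne
  obtain ⟨l, hnd, hlS, hl⟩ :=
    ih (S.erase s) (erase_ssubset hs) fun T hT => h T (hT.trans (erase_subset s S))
  have mem_erase_of_mem_l {t : α} (ht : t ∈ l) : t ∈ S.erase s := hlS ▸ List.mem_toFinset.2 ht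
  refine ⟨s :: l, List.nodup_cons.2 ⟨fun hsl => ?_, hnd⟩,
    by rw [List.toFinset_cons, hlS, insert_erase hs], hl.cons ⟨r, hr, fun t ht hrt => ?_⟩⟩
  · exact notMem_erase s S (mem_erase_of_mem_l hsl)
  · have ht' := mem_erase_of_mem_l ht
    exact ne_of_mem_erase ht' (hprivate t (mem_of_mem_erase ht') hrt)

end PeelingOrder

theorem hereditary_expansion_peeling_order_general {α β : Type*} [DecidableEq α] [DecidableEq β]
    (S : Finset α) (d : ℕ)
    (f : α → Finset β) (hf : ∀ s ∈ S, (f s).card = d)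
    (hexp : ∀ T : Finset α, T ⊆ S → T.Nonempty →
      ((d * T.card : ℕ) : ℝ) / 2 < ((T.biUnion f).card : ℝ)) :
    ∃ l : List α, l.Nodup ∧ l.toFinset = S ∧
      ∀ i : Fin l.length, ∃ r ∈ f (l.get i),
        ∀ j : Fin l.length, (i : ℕ) < (j : ℕ) → r ∉ f (l.get j) := by
  refine exists_isPeelingOrder S f fun T hTS hT =>
    Finset.exists_private_neighbor_of_sum_card_lt T f ?_
  have hsum : ∑ s ∈ T, (f s).card = d * T.card := by
    rw [Finset.sum_congr rfl fun s hs => hf s (hTS hs), Finset.sum_const, smul_eq_mul, mul_comm]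
  have hexpT := hexp T hTS hT
  rw [div_lt_iff₀ two_pos] at hexpT
  rw [hsum]
  exact_mod_cast (by linarith : ((d * T.card : ℕ) : ℝ) < 2 * (T.biUnion f).card)

/-- Hereditary expansion implies complete peeling: if every left node `s ∈ S` has
exactly `d` right neighbors `f s` and every nonempty `T ⊆ S` satisfies
`|⋃_{s ∈ T} f s| > d |T| / 2`, then the elements of `S` can be ordered
`s_1, …, s_m` so that each `s_i` has a right neighbor shared with no later `s_j`
(a single-ton for the remaining graph), so the peeling decoder removes all of `S`. -/
theorem hereditary_expansion_peeling_order {α β : Type*} [DecidableEq α] [DecidableEq β]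
    (S : Finset α) (hS : S.Nonempty) (d : ℕ) (hd : 1 ≤ d)
    (f : α → Finset β) (hf : ∀ s ∈ S, (f s).card = d)
    (hexp : ∀ T : Finset α, T ⊆ S → T.Nonempty →
      ((d * T.card : ℕ) : ℝ) / 2 < ((T.biUnion f).card : ℝ)) :
    ∃ l : List α, l.Nodup ∧ l.toFinset = S ∧
      ∀ i : Fin l.length, ∃ r ∈ f (l.get i),
        ∀ j : Fin l.length, (i : ℕ) < (j : ℕ) → r ∉ f (l.get j) :=
  hereditary_expansion_peeling_order_general S d f hf hexp
end
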